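/- For every crossing c of a virtual knot diagram, the Affine Index Polynomial weight W_±(c) computed from the Cheng-type integer labeling of arcs equals the wriggle number W(L_c) of the link obtained by orientedly smoothing c; consequently the Wriggle Polynomial equals the Affine Index Polynomial. -/

import Mathlib

open scoped Classical
open LaurentPolynomial

noncomputable section

/-- A Gauss diagram for an oriented virtual knot with `n` classical crossings: a circle
with `2 * n` marked points (positions in `ZMod (2*n)`, traversed in cyclic order), and for
each crossing `c` a signed oriented chord, recorded by the position `over c` of its
over-passage (head), the position `under c` of its under-passage (tail), and its sign. -/
structure GaussDiagram (n : ℕ) where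
  over' : Fin n → ZMod (2 * n)
  under : Fin n → ZMod (2 * n)
  sign : Fin n → ℤ
  endpoints_inj : Function.Injective
    (fun p : Fin n × Bool => if p.2 then over' p.1 else under p.1)
  sign_pm : ∀ c, sign c = 1 ∨ sign c = -1

namespace GaussDiagram

/-- `x` lies strictly inside the arc running forward (in the orientation of the circle)
from `a` to `b`. -/
def Between {m : ℕ} (a b x : ZMod m) : Prop :=
  (x - a).val < (b - a).val ∧ x ≠ a

variable {n : ℕ}

/-- After orientedly smoothing the crossing `c`, the first component of the resulting
2-component link `L_c` (the component carrying the dot placed on the incoming understrand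
of `c`) is the arc running forward from the over-passage of `c` to its under-passage. -/
def onComp1 (G : GaussDiagram n) (c : Fin n) (x : ZMod (2 * n)) : Prop :=
  Between (G.over' c) (G.under c) x

/-- The chords `c` and `d` intersect (interleave): exactly one endpoint of `d` lies in the
arc cut out by `c`; equivalently `d` becomes a linking crossing of the smoothed link `L_c`. -/
def Crosses (G : GaussDiagram n) (c d : Fin n) : Prop :=
  Xor' (G.onComp1 c (G.over' d)) (G.onComp1 c (G.under d))

/-- `d ∈ P_c`: `d` intersects `c` positively (traveling along the first component of `L_c`
one passes *over* `d`). -/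
def PosAt (G : GaussDiagram n) (c d : Fin n) : Prop :=
  G.Crosses c d ∧ G.onComp1 c (G.over' d)

/-- `d ∈ N_c`: `d` intersects `c` negatively (traveling along the first component of `L_c`
one passes *under* `d`). -/
def NegAt (G : GaussDiagram n) (c d : Fin n) : Prop :=
  G.Crosses c d ∧ G.onComp1 c (G.under d)

/-- The wriggle number `W(L_c) = lk_O(L_c) - lk_U(L_c)` of the ordered 2-component link
obtained by the oriented smoothing at `c`. -/
def wriggle (G : GaussDiagram n) (c : Fin n) : ℤ :=
  (∑ d ∈ Finset.univ.filter (fun d => G.PosAt c d), G.sign d)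
    - ∑ d ∈ Finset.univ.filter (fun d => G.NegAt c d), G.sign d

/-- The writhe: the sum of the signs of all crossings. -/
def writhe (G : GaussDiagram n) : ℤ := ∑ c, G.sign c

/-- The Wriggle Polynomial `W_K(t) = Σ_c sign(c) · t^{W(L_c)} - writhe(K)`, as a Laurent
polynomial over `ℤ`. -/
def wrigglePoly (G : GaussDiagram n) : LaurentPolynomial ℤ :=
  (∑ c, C (G.sign c) * T (G.wriggle c)) - C G.writhe

end GaussDiagram

namespace GaussDiagram

variable {n : ℕ}

/-- The change of affine label when passing (in the direction of orientation) the marked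
point `p` of the circle: passing the over-passage (head) of a chord `d` changes the label
by `-sign d`, passing its under-passage (tail) changes it by `+sign d` (so `o+` gives `-1`,
`u+` gives `+1`, `o-` gives `+1`, `u-` gives `-1`). -/
def delta (G : GaussDiagram n) (p : ZMod (2 * n)) : ℤ :=
  (∑ d ∈ Finset.univ.filter (fun d => G.over' d = p), -G.sign d)
    + ∑ d ∈ Finset.univ.filter (fun d => G.under d = p), G.sign d

/-- Kauffman's affine labeling of the arcs of the diagram: the arc of the circle running
from the marked point `a` to `a + 1` receives the label obtained by starting with label `0`
on the arc `(base, base + 1)` and applying the label changes `delta` at each marked point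
passed while traveling forward from the base arc to the arc `(a, a+1)`. -/
def labelFrom (G : GaussDiagram n) (base a : ZMod (2 * n)) : ℤ :=
  ∑ j ∈ Finset.range ((a - base).val), G.delta (base + (j : ZMod (2 * n)) + 1)

/-- The weight `W_±(c)` of a crossing computed from an arc labeling `ℓ` (where `ℓ p` is the
label of the arc `(p, p+1)`): for a positive crossing with incoming over-arc label `a` and
incoming under-arc label `b` it is `a - (b + 1)`; for a negative crossing it is
`a - (b - 1)` (equivalently, the paper's `b' - (a' - 1)` in its labeling of the arcs at a
negative crossing). -/
def weightWith (G : GaussDiagram n) (ℓ : ZMod (2 * n) → ℤ) (c : Fin n) : ℤ :=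
  if G.sign c = 1 then ℓ (G.over' c - 1) - (ℓ (G.under c - 1) + 1)
  else ℓ (G.over' c - 1) - (ℓ (G.under c - 1) - 1)

/-- The affine index weight `W_±(c)` computed from the affine labeling based at `base`. -/
def affineWeight (G : GaussDiagram n) (base : ZMod (2 * n)) (c : Fin n) : ℤ :=
  G.weightWith (G.labelFrom base) c

/-- The Affine Index Polynomial `Σ_c sign(c) · t^{W_±(c)} - writhe(K)` computed from the
affine labeling based at `base`. -/
def affinePoly (G : GaussDiagram n) (base : ZMod (2 * n)) : LaurentPolynomial ℤ :=
  (∑ c, C (G.sign c) * T (G.affineWeight base c)) - C G.writhe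

end GaussDiagram

open GaussDiagram

/-! The affine label of an arc is a partial sum, along the circle, of the jumps `delta`; these
jumps sum to zero over the whole circle (each chord contributes `-sign` at its head and `+sign`
at its tail), so the difference of two labels is the sum of the jumps over the arc between
them, whatever the base arc. At the crossing `c` the weight is therefore the sum of the jumps
over the arc `[under c, over c)`, i.e. over the second component of `L_c`, minus `sign c`. On
that arc the tail of `c` contributes `sign c`, a chord with both ends on one component
contributes nothing, and a chord joining the two components contributes `+sign` or `-sign`
according as its head lies on the first or the second component: this is the wriggle number. -/

namespace ZMod

/-- The sum of `F` over the half-open arc `[a, b)` of the circle `ZMod N`. -/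
def arcSum {N : ℕ} {M : Type*} [AddCommMonoid M] (F : ZMod N → M) (a b : ZMod N) : M :=
  ∑ j ∈ Finset.range (b - a).val, F (a + j)

variable {N : ℕ} [NeZero N] {M : Type*} [AddCommGroup M]

theorem sum_range_eq_sum_filter_val_lt (F : ZMod N → M) (a : ZMod N) {m : ℕ} (hm : m ≤ N) :
    ∑ j ∈ Finset.range m, F (a + j) =
      ∑ x ∈ Finset.univ.filter (fun x => (x - a).val < m), F x := by
  refine Finset.sum_nbij' (fun j => a + j) (fun x => (x - a).val) ?_ ?_ ?_ ?_ (fun _ _ => rfl)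
  · intro j hj
    simp_all [val_cast_of_lt ((Finset.mem_range.mp hj).trans_le hm)]
  · intro x hx
    simpa using hx
  · intro j hj
    simp [val_cast_of_lt ((Finset.mem_range.mp hj).trans_le hm)]
  · intro x _
    simp

theorem sum_range_period (F : ZMod N → M) (a : ZMod N) :
    ∑ j ∈ Finset.range N, F (a + j) = ∑ x, F x := by
  rw [sum_range_eq_sum_filter_val_lt F a le_rfl,
    Finset.filter_true_of_mem fun x _ => val_lt (x - a)]

theorem sum_range_mod_of_sum_eq_zero {F : ZMod N → M} (hF : ∑ x, F x = 0) (a : ZMod N) (k : ℕ) :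
    ∑ j ∈ Finset.range k, F (a + j) = ∑ j ∈ Finset.range (k % N), F (a + j) := by
  suffices ∀ r q : ℕ, ∑ j ∈ Finset.range (r + N * q), F (a + j) =
      ∑ j ∈ Finset.range r, F (a + j) by
    conv_lhs => rw [← Nat.mod_add_div k N]
    exact this _ _
  intro r q
  induction q with
  | zero => simp
  | succ q ih =>
    rw [Nat.mul_succ, ← add_assoc, Finset.sum_range_add, ih, add_eq_left]
    simpa [add_assoc] using (sum_range_period F (a + r)).trans hF

theorem arcSum_add_arcSum {F : ZMod N → M} (hF : ∑ x, F x = 0) (a b c : ZMod N) :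
    arcSum F a b + arcSum F b c = arcSum F a c := by
  have hval : ((b - a).val + (c - b).val) % N = (c - a).val := by
    rw [← val_add, sub_add_sub_cancel']
  simp only [arcSum]
  rw [← hval, ← sum_range_mod_of_sum_eq_zero hF, Finset.sum_range_add]
  simp [← add_assoc]

end ZMod

namespace GaussDiagram

theorem sub_val_lt_iff_not_between {N : ℕ} [NeZero N] {o u x : ZMod N} (hou : o ≠ u)
    (hx : x ≠ o) :
    (x - u).val < (o - u).val ↔ ¬ Between o u x := by
  have : NeZero (o - u) := ⟨sub_ne_zero.mpr hou⟩
  have hpq : (x - u).val ≠ (o - u).val := fun h => hx (sub_left_inj.mp (ZMod.val_injective N h))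
  have hr : (u - o).val = N - (o - u).val := by rw [← neg_sub, ZMod.val_neg_of_ne_zero]
  have hs : (x - o).val = ((x - u).val + (u - o).val) % N := by
    rw [← ZMod.val_add, sub_add_sub_cancel]
  have := ZMod.val_lt (x - u)
  have := ZMod.val_lt (o - u)
  have := (ZMod.val_pos (a := o - u)).mpr (NeZero.ne _)
  simp only [Between, hs, hr, ne_eq, hx, not_false_eq_true, and_true, not_lt]
  rcases lt_or_gt_of_ne hpq with h | h
  · rw [Nat.mod_eq_of_lt (by omega)]; omega
  · rw [Nat.mod_eq_sub_mod (by omega), Nat.mod_eq_of_lt (by omega)]; omega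

variable {n : ℕ} (G : GaussDiagram n)

theorem endpoint_ne_endpoint {c d : Fin n} (hcd : c ≠ d) (b b' : Bool) :
    (if b then G.over' c else G.under c) ≠ (if b' then G.over' d else G.under d) :=
  fun h => hcd (congrArg Prod.fst (G.endpoints_inj (a₁ := (c, b)) (a₂ := (d, b')) h))

theorem over_ne_under (c : Fin n) : G.over' c ≠ G.under c := fun h =>
  Bool.noConfusion (congrArg Prod.snd (G.endpoints_inj (a₁ := (c, true)) (a₂ := (c, false)) h))

theorem sum_delta (S : Finset (ZMod (2 * n))) :
    ∑ x ∈ S, G.delta x =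
      ∑ d, ((if G.under d ∈ S then G.sign d else 0) - if G.over' d ∈ S then G.sign d else 0) := by
  simp only [delta, Finset.sum_add_distrib, Finset.sum_sub_distrib, ← Finset.sum_filter,
    Finset.sum_neg_distrib, Finset.sum_fiberwise_eq_sum_filter]
  ring

theorem sum_univ_delta [NeZero (2 * n)] : ∑ x, G.delta x = 0 := by
  simp [sum_delta]

theorem posAt_iff (c d : Fin n) :
    G.PosAt c d ↔ G.onComp1 c (G.over' d) ∧ ¬ G.onComp1 c (G.under d) := by
  change Xor _ _ ∧ _ ↔ _
  rw [xor_def]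
  tauto

theorem negAt_iff (c d : Fin n) :
    G.NegAt c d ↔ G.onComp1 c (G.under d) ∧ ¬ G.onComp1 c (G.over' d) := by
  change Xor _ _ ∧ _ ↔ _
  rw [xor_def]
  tauto

theorem ite_mem_arc_sub_ite_mem_arc [NeZero (2 * n)] (c d : Fin n) :
    let A := Finset.univ.filter fun x => (x - G.under c).val < (G.over' c - G.under c).val
    ((if G.under d ∈ A then G.sign d else 0) - if G.over' d ∈ A then G.sign d else 0) =
      ((if G.PosAt c d then G.sign d else 0) - if G.NegAt c d then G.sign d else 0) +
        if d = c then G.sign d else 0 := by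
  intro A
  have hmem {x} (hx : x ≠ G.over' c) : x ∈ A ↔ ¬ G.onComp1 c x := by
    simpa [A, onComp1] using sub_val_lt_iff_not_between (G.over_ne_under c) hx
  by_cases hdc : d = c
  · subst hdc
    have hu : G.under d ∈ A := by
      simpa [A, ZMod.val_pos, sub_eq_zero] using G.over_ne_under d
    have hP : ¬ G.PosAt d d := fun h => h.2.2 rfl
    have hN : ¬ G.NegAt d d := fun h => lt_irrefl _ h.2.1
    simp [A, hu, hP, hN]
  · have hu : G.under d ≠ G.over' c := G.endpoint_ne_endpoint hdc false true
    have ho : G.over' d ≠ G.over' c := G.endpoint_ne_endpoint hdc true true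
    rw [if_congr (hmem hu) rfl rfl, if_congr (hmem ho) rfl rfl]
    by_cases hP : G.onComp1 c (G.over' d) <;> by_cases hQ : G.onComp1 c (G.under d) <;>
      simp [posAt_iff, negAt_iff, hP, hQ, hdc]

theorem arcSum_delta_under_over [NeZero (2 * n)] (c : Fin n) :
    ZMod.arcSum G.delta (G.under c) (G.over' c) = G.wriggle c + G.sign c := by
  rw [ZMod.arcSum, ZMod.sum_range_eq_sum_filter_val_lt _ _ (ZMod.val_lt _).le, sum_delta,
    Finset.sum_congr rfl fun d _ => G.ite_mem_arc_sub_ite_mem_arc c d,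
    Finset.sum_add_distrib, Finset.sum_sub_distrib, Finset.sum_ite_eq']
  simp [wriggle, Finset.sum_filter]

theorem labelFrom_eq_arcSum (base a : ZMod (2 * n)) :
    G.labelFrom base a = ZMod.arcSum G.delta (base + 1) (a + 1) := by
  simp only [labelFrom, ZMod.arcSum, add_sub_add_right_eq_sub, add_right_comm]

theorem weightWith_eq (ℓ : ZMod (2 * n) → ℤ) (c : Fin n) :
    G.weightWith ℓ c = ℓ (G.over' c - 1) - ℓ (G.under c - 1) - G.sign c := by
  rcases G.sign_pm c with h | h <;> simp [weightWith, h] <;> ring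

end GaussDiagram

/-- For every crossing `c` of a virtual knot diagram, the Affine Index
Polynomial weight `W_±(c)` computed from the integer labeling of the arcs (based at any
arc) equals the wriggle number `W(L_c)` of the link obtained by orientedly smoothing `c`;
consequently the Wriggle Polynomial equals the Affine Index Polynomial. -/
theorem affineWeight_eq_wriggle {n : ℕ} (G : GaussDiagram n) (base : ZMod (2 * n)) :
    (∀ c : Fin n, G.affineWeight base c = G.wriggle c) ∧
      G.affinePoly base = G.wrigglePoly := by
  have hweight (c : Fin n) : G.affineWeight base c = G.wriggle c := by
    have : NeZero (2 * n) := ⟨by have := c.pos; omega⟩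
    have hcocycle := ZMod.arcSum_add_arcSum G.sum_univ_delta (base + 1) (G.under c) (G.over' c)
    rw [affineWeight, weightWith_eq, labelFrom_eq_arcSum, labelFrom_eq_arcSum, sub_add_cancel,
      sub_add_cancel, ← hcocycle, arcSum_delta_under_over]
    ring
  refine ⟨hweight, ?_⟩
  simp only [affinePoly, wrigglePoly, hweight]
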